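/- Let G be a finite p-group of conjugate type {1, pⁿ}. Then the subgroup Ω₁(Z(G)) of elements of the center of order dividing p has order at least pⁿ. -/

import Mathlib

/-- The conjugacy class of `x` in a group. -/
def conjClass {G : Type*} [Group G] (x : G) : Set G := {y | ∃ g : G, g⁻¹ * x * g = y}

/-- `G` is of conjugate type `{1, m}`: every conjugacy class has size `1` or `m`,
and some class has size `m`. -/
def IsConjugateType (G : Type*) [Group G] (m : ℕ) : Prop :=
  (∀ x : G, Nat.card (conjClass x) = 1 ∨ Nat.card (conjClass x) = m) ∧
  (∃ x : G, Nat.card (conjClass x) = m)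

/-- `G` is a Camina group: the class of every `x ∉ G'` is the coset `xG'`. -/
def IsCamina (G : Type*) [Group G] : Prop :=
  ∀ x : G, x ∉ commutator G → conjClass x = (fun c => x * c) '' (commutator G : Set G)

open scoped commutatorElement

/-- Two groups are isoclinic. -/
def Isoclinic (G H : Type*) [Group G] [Group H] : Prop :=
  ∃ (φ : (G ⧸ Subgroup.center G) ≃* (H ⧸ Subgroup.center H))
    (θ : (commutator G) ≃* (commutator H)),
    ∀ (x y : G) (x' y' : H),
      φ (QuotientGroup.mk x) = QuotientGroup.mk x' →
      φ (QuotientGroup.mk y) = QuotientGroup.mk y' →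
      (θ ⟨⁅x, y⁆, Subgroup.commutator_mem_commutator (Subgroup.mem_top x) (Subgroup.mem_top y)⟩ : H) = ⁅x', y'⁆


/-! If `G` is not abelian, the `p`-group `G/Z(G)` has a central element of order `p`; a lift
`x` lies in `Z₂(G) \ Z(G)` and has `x ^ p ∈ Z(G)`. Each conjugate of `x` is `c * x` with
`c ∈ Z(G)`, and comparing `p`-th powers of the conjugates `x` and `c * x` gives `c ^ p = 1`.
Hence `y ↦ y * x⁻¹` embeds the class of `x`, of size `pⁿ`, into `Ω₁(Z(G))`. -/

section

variable {G : Type*} [Group G]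

open Subgroup (center mem_center_iff coe_center)

theorem mem_conjClass_iff {x y : G} : y ∈ conjClass x ↔ IsConj x y := by
  rw [isConj_iff]
  exact ⟨fun ⟨g, hg⟩ => ⟨g⁻¹, by simpa using hg⟩,
    fun ⟨c, hc⟩ => ⟨c⁻¹, by simpa using hc⟩⟩

theorem conjClass_eq_singleton_of_mem_center {x : G} (hx : x ∈ center G) : conjClass x = {x} :=
  Set.ext fun y => by
    rw [mem_conjClass_iff, Set.mem_singleton_iff, eq_comm]
    exact ⟨fun h => h.eq_of_left_mem_center (by rwa [← coe_center]),
      fun h => h ▸ IsConj.refl x⟩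

theorem card_conjClass_eq_one_iff {x : G} : Nat.card (conjClass x) = 1 ↔ x ∈ center G := by
  refine ⟨fun h => mem_center_iff.mpr fun g => ?_,
    fun hx => by rw [conjClass_eq_singleton_of_mem_center hx, Nat.card_unique]⟩
  obtain ⟨a, ha⟩ := Set.ncard_eq_one.mp (Nat.card_coe_set_eq _ ▸ h)
  have hself : x ∈ conjClass x := ⟨1, by simp⟩
  have hconj : g⁻¹ * x * g ∈ conjClass x := ⟨g, rfl⟩
  rw [ha, Set.mem_singleton_iff] at hself hconj
  rw [← hself] at hconj
  calc g * x = g * (g⁻¹ * x * g) := by rw [hconj]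
    _ = x * g := by group

theorem pow_eq_one_of_isConj_mul_of_mem_center {x c : G} {p : ℕ} (hc : c ∈ center G)
    (hxp : x ^ p ∈ center G) (hconj : IsConj x (c * x)) : c ^ p = 1 := by
  have h : x ^ p = c ^ p * x ^ p := by
    rw [← Commute.mul_pow (mem_center_iff.mp hc x).symm]
    exact (hconj.pow p).eq_of_left_mem_center (by rwa [← coe_center])
  simpa using h.symm

theorem card_conjClass_le_card_omega_center [Finite G] {x : G} (p : ℕ)
    (hx : x ∈ Subgroup.upperCentralSeries G 2) (hxp : x ^ p ∈ center G) :
    Nat.card (conjClass x) ≤ Nat.card {z : G | z ∈ center G ∧ z ^ p = 1} := by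
  have hcomm : ∀ y ∈ conjClass x, y * x⁻¹ ∈ center G := by
    rintro y hy
    obtain ⟨c, rfl⟩ := isConj_iff.mp (mem_conjClass_iff.mp hy)
    have := inv_mem (Subgroup.mem_upperCentralSeries_succ_iff.mp hx c)
    rwa [commutatorElement_inv, Subgroup.upperCentralSeries_one, commutatorElement_def] at this
  refine Nat.card_le_card_of_injective
    (fun y => ⟨y.1 * x⁻¹, hcomm y.1 y.2,
      pow_eq_one_of_isConj_mul_of_mem_center (hcomm y.1 y.2) hxp ?_⟩)
    fun y y' h => Subtype.ext (mul_right_cancel (congrArg Subtype.val h))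
  simpa using mem_conjClass_iff.mp y.2

theorem mem_upperCentralSeries_two_iff {x : G} :
    x ∈ Subgroup.upperCentralSeries G 2 ↔ (x : G ⧸ center G) ∈ center (G ⧸ center G) := by
  rw [Subgroup.mem_upperCentralSeries_succ_iff, Subgroup.upperCentralSeries_one,
    ← Subgroup.mem_upperCentralSeriesStep, Subgroup.upperCentralSeriesStep_eq_comap_center]
  rfl

theorem IsPGroup.exists_noncentral_mem_upperCentralSeries_two_pow_mem_center [Finite G] {p : ℕ}
    [Fact p.Prime] (hG : IsPGroup p G) (hZ : center G ≠ ⊤) :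
    ∃ x ∉ center G, x ∈ Subgroup.upperCentralSeries G 2 ∧ x ^ p ∈ center G := by
  have : Nontrivial (G ⧸ center G) := QuotientGroup.nontrivial_iff.mpr hZ
  have hQ := hG.to_quotient (center G)
  have hZQ := hQ.center_nontrivial
  obtain ⟨k, hk, hcard⟩ := (hQ.to_subgroup _).nontrivial_iff_card.mp hZQ
  obtain ⟨⟨z, hzZ⟩, hz⟩ :=
    exists_prime_orderOf_dvd_card' p (hcard ▸ dvd_pow_self p hk.ne')
  rw [Subgroup.orderOf_mk] at hz
  obtain ⟨x, rfl⟩ := QuotientGroup.mk_surjective z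
  refine ⟨x, ?_, mem_upperCentralSeries_two_iff.mpr hzZ, ?_⟩
  · rw [← QuotientGroup.eq_one_iff, ← orderOf_eq_one_iff, hz]
    exact (Fact.out : p.Prime).ne_one
  · rw [← QuotientGroup.eq_one_iff, QuotientGroup.mk_pow, ← hz, pow_orderOf_eq_one]

end

/-- In a finite p-group of conjugate type {1, pⁿ}, the subgroup of central elements of
order dividing p has order at least pⁿ. -/
theorem omega_center_lower_bound {p n : ℕ} [Fact p.Prime] (hn : 1 ≤ n)
    {G : Type*} [Group G] [Finite G] (hG : IsPGroup p G)
    (ht : IsConjugateType G (p ^ n)) :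
    p ^ n ≤ Nat.card {z : G | z ∈ Subgroup.center G ∧ z ^ p = 1} := by
  have hpn : p ^ n ≠ 1 := (Nat.one_lt_pow (by omega) (Fact.out : p.Prime).one_lt).ne'
  obtain ⟨x₀, hx₀⟩ := ht.2
  have hZ : Subgroup.center G ≠ ⊤ := fun h =>
    hpn (hx₀ ▸ card_conjClass_eq_one_iff.mpr (h ▸ Subgroup.mem_top x₀))
  obtain ⟨x, hxZ, hx, hxp⟩ := hG.exists_noncentral_mem_upperCentralSeries_two_pow_mem_center hZ
  have hcard : Nat.card (conjClass x) = p ^ n :=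
    (ht.1 x).resolve_left (mt card_conjClass_eq_one_iff.mp hxZ)
  exact hcard ▸ card_conjClass_le_card_omega_center p hx hxp
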